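/- Let L be a list of distinct keys, a a new key not in L, and L' = a :: L. For any pivot p in the recursion tree Q(L') with p < a, every key that lies in the left subtree of p in Q(L) also lies in the left subtree of p in Q(L'). Symmetrically, if p > a, every key in the right subtree of p in Q(L) also lies in the right subtree of p in Q(L'). -/

import Mathlib

/-- The list of inputs to all recursive calls (nodes of the recursion tree)
of head-pivot Quicksort on `L`. -/
def calls : List ℤ → List (List ℤ)
  | [] => []
  | h :: t =>
      (h :: t) :: (calls (t.filter (· < h)) ++ calls (t.filter (h < ·)))
termination_by L => L.length
decreasing_by
  all_goals simp [Nat.lt_succ_iff, List.length_filter_le]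
  all_goals exact (List.length_filter_le _ _).trans (le_of_eq (by simp))

/-- `k` lies in the left subtree of the node with pivot `p`
in the recursion tree of Quicksort on `L`. -/
def inLeft (L : List ℤ) (p k : ℤ) : Prop :=
  ∃ M ∈ calls L, M.head? = some p ∧ k ∈ M.tail.filter (· < p)

/-- `k` lies in the right subtree of the node with pivot `p`
in the recursion tree of Quicksort on `L`. -/
def inRight (L : List ℤ) (p k : ℤ) : Prop :=
  ∃ M ∈ calls L, M.head? = some p ∧ k ∈ M.tail.filter (p < ·)

/-! A node of `Q(L)` whose pivot lies in an order-convex set `s` reappears, filtered to `s`,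
as a node of `Q(L.filter s)`: partitioning around a pivot in `s` commutes with filtering, and a
pivot outside `s` sends all of `s` to the same side. The left (resp. right) child call of
`Q(a :: L)` is `Q` of `L` filtered to the order-convex set `(-∞, a)` (resp. `(a, ∞)`). -/

theorem Set.OrdConnected.lt_of_notMem_of_lt {α : Type*} [LinearOrder α] {s : Set α}
    (hs : s.OrdConnected) {p h x : α} (hp : p ∈ s) (hh : h ∉ s) (hph : p < h) (hx : x ∈ s) :
    x < h :=
  lt_of_not_ge fun hhx => hh (hs.out hp hx ⟨hph.le, hhx⟩)

theorem Set.OrdConnected.lt_of_notMem_of_gt {α : Type*} [LinearOrder α] {s : Set α}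
    (hs : s.OrdConnected) {p h x : α} (hp : p ∈ s) (hh : h ∉ s) (hhp : h < p) (hx : x ∈ s) :
    h < x :=
  lt_of_not_ge fun hxh => hh (hs.out hx hp ⟨hxh, hhp.le⟩)

theorem List.filter_filter_of_imp {α : Type*} {p q : α → Bool} {l : List α}
    (h : ∀ x, q x → p x) : (l.filter p).filter q = l.filter q := by
  rw [List.filter_filter]
  exact List.filter_congr fun x _ => by cases hqx : q x <;> simp [h x, hqx]

theorem sublist_of_mem_calls : ∀ {L M : List ℤ}, M ∈ calls L → M.Sublist L
  | [], _, hM => by simp [calls] at hM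
  | h :: t, M, hM => by
    rw [calls.eq_2] at hM
    rcases List.mem_cons.1 hM with rfl | hM
    · exact List.Sublist.refl _
    rcases List.mem_append.1 hM with hM | hM
    · exact ((sublist_of_mem_calls hM).trans List.filter_sublist).cons h
    · exact ((sublist_of_mem_calls hM).trans List.filter_sublist).cons h
termination_by L => L.length
decreasing_by all_goals exact Nat.lt_succ_of_le (List.length_filter_le _ _)

theorem filter_mem_calls_filter {q : ℤ → Bool} (hq : {x | q x}.OrdConnected) :
    ∀ {L M : List ℤ} {p : ℤ}, M ∈ calls L → M.head? = some p → q p →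
      M.filter q ∈ calls (L.filter q)
  | [], _, _, hM, _, _ => by simp [calls] at hM
  | h :: t, M, p, hM, hp, hqp => by
    rw [calls.eq_2] at hM
    rcases List.mem_cons.1 hM with rfl | hM
    · obtain rfl : h = p := by simpa using hp
      rw [List.filter_cons_of_pos hqp, calls.eq_2]
      exact List.mem_cons_self
    have hpM : p ∈ M := List.mem_of_mem_head? hp
    by_cases hqh : q h
    · rw [List.filter_cons_of_pos hqh, calls.eq_2]
      refine List.mem_cons_of_mem _ (List.mem_append.2 ?_)
      rcases List.mem_append.1 hM with hM | hM
      · exact .inl (List.filter_comm q _ t ▸ filter_mem_calls_filter hq hM hp hqp)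
      · exact .inr (List.filter_comm q _ t ▸ filter_mem_calls_filter hq hM hp hqp)
    rw [List.filter_cons_of_neg hqh]
    rcases List.mem_append.1 hM with hM | hM
    · have hph : p < h := by
        simpa using (List.mem_filter.1 ((sublist_of_mem_calls hM).subset hpM)).2
      have hfilter : (t.filter (· < h)).filter q = t.filter q :=
        List.filter_filter_of_imp fun x hqx => by
          simpa using hq.lt_of_notMem_of_lt hqp hqh hph hqx
      exact hfilter ▸ filter_mem_calls_filter hq hM hp hqp
    · have hhp : h < p := by
        simpa using (List.mem_filter.1 ((sublist_of_mem_calls hM).subset hpM)).2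
      have hfilter : (t.filter (h < ·)).filter q = t.filter q :=
        List.filter_filter_of_imp fun x hqx => by
          simpa using hq.lt_of_notMem_of_gt hqp hqh hhp hqx
      exact hfilter ▸ filter_mem_calls_filter hq hM hp hqp
termination_by L => L.length
decreasing_by all_goals exact Nat.lt_succ_of_le (List.length_filter_le _ _)

theorem exists_node_filter {q : ℤ → Bool} (hq : {x | q x}.OrdConnected) (f : ℤ → Bool)
    {L M : List ℤ} {p k : ℤ} (hM : M ∈ calls L) (hp : M.head? = some p) (hqp : q p)
    (hk : k ∈ M.tail.filter f) (hqk : q k) :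
    ∃ M' ∈ calls (L.filter q), M'.head? = some p ∧ k ∈ M'.tail.filter f := by
  obtain ⟨T, rfl⟩ : ∃ T, M = p :: T := List.head?_eq_some_iff.1 hp
  refine ⟨_, filter_mem_calls_filter hq hM hp hqp, by simp [hqp], ?_⟩
  simp only [List.filter_cons_of_pos hqp, List.tail_cons, List.mem_filter] at hk ⊢
  exact ⟨⟨hk.1, hqk⟩, hk.2⟩

theorem stmt1_general (L : List ℤ) (a : ℤ) (p k : ℤ) :
    (p < a → inLeft L p k → inLeft (a :: L) p k) ∧
    (a < p → inRight L p k → inRight (a :: L) p k) := by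
  constructor
  · rintro hpa ⟨M, hM, hp, hk⟩
    have hka : k < a := (by simpa using (List.mem_filter.1 hk).2 : k < p).trans hpa
    obtain ⟨M', hM', hM'p, hkM'⟩ := exists_node_filter (q := (· < a))
      (by simp only [decide_eq_true_eq]; exact Set.ordConnected_Iio) _ hM hp
      (decide_eq_true hpa) hk (decide_eq_true hka)
    refine ⟨M', ?_, hM'p, hkM'⟩
    rw [calls.eq_2]
    exact List.mem_cons_of_mem _ (List.mem_append_left _ hM')
  · rintro hap ⟨M, hM, hp, hk⟩
    have hak : a < k := hap.trans (by simpa using (List.mem_filter.1 hk).2)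
    obtain ⟨M', hM', hM'p, hkM'⟩ := exists_node_filter (q := (a < ·))
      (by simp only [decide_eq_true_eq]; exact Set.ordConnected_Ioi) _ hM hp
      (decide_eq_true hap) hk (decide_eq_true hak)
    refine ⟨M', ?_, hM'p, hkM'⟩
    rw [calls.eq_2]
    exact List.mem_cons_of_mem _ (List.mem_append_right _ hM')

/-- For `L' = a :: L` with `a` fresh: if `p < a` is a pivot of `Q(L')`, every
key in the left subtree of `p` in `Q(L)` is in the left subtree of `p` in
`Q(L')`; symmetrically for `p > a` and right subtrees. -/
theorem stmt1 (L : List ℤ) (hnd : L.Nodup) (a : ℤ) (ha : a ∉ L)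
    (p k : ℤ) (hp : ∃ M ∈ calls (a :: L), M.head? = some p) :
    (p < a → inLeft L p k → inLeft (a :: L) p k) ∧
    (a < p → inRight L p k → inRight (a :: L) p k) :=
  stmt1_general L a p k
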